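/- For every n ≥ 1, every a : ℕ, and every b < 2^n: if T^[n](b) is odd then T^[(n+1)](2^(n+1)*a + 2^n + b) = 3^(m(b,n)) * a + (3^(m(b,n)) + T^[n](b))/2, and if T^[n](b) is even then T^[(n+1)](2^(n+1)*a + 2^n + b) = 3^(m(b,n)+1) * a + (3^(m(b,n)+1) + 3*T^[n](b) + 1)/2. -/

import Mathlib

def T (N : ℕ) : ℕ := if N % 2 = 0 then N / 2 else (3 * N + 1) / 2

def m (b n : ℕ) : ℕ := ((Finset.range n).filter (fun k => Odd (T^[k] b))).card

/-!
Writing `N = 2 ^ n * a + b`, each step of `T` halves the multiple of `2 ^ n` and, when the current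
iterate of `b` is odd, multiplies it by 3; so `T^[n] (2 ^ n * a + b) = 3 ^ m b n * a + T^[n] b`.
Applied to `2 ^ (n + 1) * a + 2 ^ n + b = 2 ^ n * (2 * a + 1) + b`, this leaves one more step of `T`
on `3 ^ m b n * (2 * a + 1) + T^[n] b`, whose parity is opposite to that of `T^[n] b`.
-/

lemma T_of_even {x : ℕ} (hx : Even x) : T x = x / 2 := by
  simp [T, Nat.even_iff.mp hx]

lemma T_of_odd {x : ℕ} (hx : Odd x) : T x = (3 * x + 1) / 2 := by
  simp [T, Nat.odd_iff.mp hx]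

lemma T_two_mul_add (c b : ℕ) : T (2 * c + b) = 3 ^ (if Odd b then 1 else 0) * c + T b := by
  rcases Nat.even_or_odd b with hb | hb
  · rw [T_of_even hb, T_of_even ((even_two_mul c).add hb), if_neg (Nat.not_odd_iff_even.mpr hb)]
    omega
  · rw [T_of_odd hb, T_of_odd ((even_two_mul c).add_odd hb), if_pos hb]
    omega

lemma m_succ (b n : ℕ) : m b (n + 1) = m (T b) n + if Odd b then 1 else 0 := by
  simp only [m, Finset.card_filter, Finset.sum_range_succ', Function.iterate_succ_apply,
    Function.iterate_zero_apply]
  congr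

lemma iterate_T_two_pow_mul_add (n a b : ℕ) :
    T^[n] (2 ^ n * a + b) = 3 ^ m b n * a + T^[n] b := by
  induction n generalizing a b with
  | zero => simp [m]
  | succ n ih =>
    rw [Function.iterate_succ_apply, pow_succ', mul_assoc, T_two_mul_add, mul_left_comm, ih,
      m_succ, pow_add, mul_assoc, Function.iterate_succ_apply]

theorem stmt17 : ∀ n ≥ 1, ∀ a : ℕ, ∀ b < 2 ^ n,
    (Odd (T^[n] b) →
      T^[n + 1] (2 ^ (n + 1) * a + 2 ^ n + b) = 3 ^ m b n * a + (3 ^ m b n + T^[n] b) / 2) ∧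
    (Even (T^[n] b) →
      T^[n + 1] (2 ^ (n + 1) * a + 2 ^ n + b)
        = 3 ^ (m b n + 1) * a + (3 ^ (m b n + 1) + 3 * T^[n] b + 1) / 2) := by
  intro n _ a b _
  have hM : Odd (3 ^ m b n) := Odd.pow (by decide)
  have h : T^[n + 1] (2 ^ (n + 1) * a + 2 ^ n + b)
      = T (2 * (3 ^ m b n * a) + (3 ^ m b n + T^[n] b)) := by
    rw [Function.iterate_succ_apply', show 2 ^ (n + 1) * a + 2 ^ n + b = 2 ^ n * (2 * a + 1) + b
      by ring, iterate_T_two_pow_mul_add]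
    congr 1
    ring
  refine ⟨fun ht => ?_, fun ht => ?_⟩
  · rw [h, T_two_mul_add, if_neg (Nat.not_odd_iff_even.mpr (hM.add_odd ht)), pow_zero, one_mul,
      T_of_even (hM.add_odd ht)]
  · rw [h, T_two_mul_add, if_pos (hM.add_even ht), pow_one, T_of_odd (hM.add_even ht), pow_succ',
      mul_assoc]
    omega
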